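/- arXiv:1911.07422 — 7 statements merged into one kernel-verified Lean document; each statement's English description precedes it below -/
import Mathlib

section
/- Let Γ ⊆ C_b(S) be admissible. Then for all μ, ν ∈ P(S), G_Γ(μ‖ν) ≥ 0, and G_Γ(μ‖ν) = 0 if and only if μ = ν. -/
open MeasureTheory Filter Topology BoundedContinuousFunction Set ENNReal

noncomputable section

variable {S : Type*}

/-- Integral of a function against a finite signed measure. -/
def sInt [MeasurableSpace S] (μ : MeasureTheory.SignedMeasure S) (g : S → ℝ) : ℝ :=
  ∫ x, g x ∂μ.toJordanDecomposition.posPart - ∫ x, g x ∂μ.toJordanDecomposition.negPart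

/-- Γ-divergence, signed first argument. -/
def GdivS [MeasurableSpace S] [TopologicalSpace S]
    (Γ : Set (BoundedContinuousFunction S ℝ)) (μ : SignedMeasure S) (ν : Measure S) : EReal :=
  ⨆ g ∈ Γ, ((sInt μ g - Real.log (∫ x, Real.exp (g x) ∂ν) : ℝ) : EReal)

/-- Γ-divergence. -/
def Gdiv [MeasurableSpace S] [TopologicalSpace S]
    (Γ : Set (BoundedContinuousFunction S ℝ)) (μ ν : Measure S) : EReal :=
  ⨆ g ∈ Γ, ((∫ x, g x ∂μ - Real.log (∫ x, Real.exp (g x) ∂ν) : ℝ) : EReal)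

/-- W_Γ of a signed measure. -/
def WdivS [MeasurableSpace S] [TopologicalSpace S]
    (Γ : Set (BoundedContinuousFunction S ℝ)) (η : SignedMeasure S) : EReal :=
  ⨆ g ∈ Γ, ((sInt η g : ℝ) : EReal)

-- Relative entropy
open scoped Classical in
def relEnt [MeasurableSpace S] (γ ν : Measure S) : EReal :=
  if γ ≪ ν ∧ Integrable (fun x => Real.log ((γ.rnDeriv ν x).toReal)) γ
  then ((∫ x, Real.log ((γ.rnDeriv ν x).toReal) ∂γ : ℝ) : EReal)
  else ⊤

/-- The weak topology on C_b(S) induced by M(S). -/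
def cbWeak (S : Type*) [MeasurableSpace S] [TopologicalSpace S] :
    TopologicalSpace (BoundedContinuousFunction S ℝ) :=
  TopologicalSpace.induced (fun f (μ : SignedMeasure S) => sInt μ f) inferInstance

/-- Admissible sets of test functions. -/
structure Admissible [MeasurableSpace S] [TopologicalSpace S]
    (Γ : Set (BoundedContinuousFunction S ℝ)) : Prop where
  convex : Convex ℝ Γ
  closed : @IsClosed _ (cbWeak S) Γ
  neg_mem : ∀ g ∈ Γ, -g ∈ Γ
  const_mem : ∀ r : ℝ, BoundedContinuousFunction.const S r ∈ Γ
  determining : ∀ μ ν : Measure S, IsProbabilityMeasure μ → IsProbabilityMeasure ν →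
    (∀ g ∈ Γ, ∫ x, g x ∂μ = ∫ x, g x ∂ν) → μ = ν

/-- Bounded continuous c-Lipschitz functions. -/
def LipB [TopologicalSpace S] (c : S → S → ℝ≥0∞) : Set (BoundedContinuousFunction S ℝ) :=
  {f | ∀ x y, ((f x - f y : ℝ) : EReal) ≤ (c x y : EReal)}

/-- Continuous (possibly unbounded) c-Lipschitz functions. -/
def LipU [TopologicalSpace S] (c : S → S → ℝ≥0∞) : Set (S → ℝ) :=
  {f | Continuous f ∧ ∀ x y, ((f x - f y : ℝ) : EReal) ≤ (c x y : EReal)}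

/-- Optimal transport cost in dual form. -/
def Wc [MeasurableSpace S] [TopologicalSpace S] (c : S → S → ℝ≥0∞) (μ γ : Measure S) : EReal :=
  ⨆ g ∈ LipB c, ((∫ x, g x ∂μ - ∫ x, g x ∂γ : ℝ) : EReal)

/-- Topological support of a measure. -/
def msupport [TopologicalSpace S] [MeasurableSpace S] (ν : Measure S) : Set S :=
  {x | ∀ U ∈ 𝓝 x, 0 < ν U}

/-- Upper (outer) Lebesgue integral. -/
def upperLintegral [MeasurableSpace S] (π : Measure S) (F : S → ℝ≥0∞) : ℝ≥0∞ :=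
  ⨅ G ∈ {G : S → ℝ≥0∞ | Measurable G ∧ ∀ x, F x ≤ G x}, ∫⁻ x, G x ∂π


section Aux
variable [TopologicalSpace S] [MeasurableSpace S] [OpensMeasurableSpace S]

lemma exp_integrable_aux (ν : Measure S) [IsFiniteMeasure ν] (f : BoundedContinuousFunction S ℝ) :
    Integrable (fun x => Real.exp (f x)) ν := by
  refine Integrable.mono' (integrable_const (Real.exp ‖f‖))
    ((Real.continuous_exp.comp f.continuous).aestronglyMeasurable) ?_
  filter_upwards with x
  rw [Real.norm_eq_abs, Real.abs_exp]
  exact Real.exp_le_exp.mpr ((abs_le.mp (f.norm_coe_le_norm x)).2)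

lemma jensen_le_aux (ν : Measure S) [IsProbabilityMeasure ν] (f : BoundedContinuousFunction S ℝ) :
    ∫ x, f x ∂ν ≤ Real.log (∫ x, Real.exp (f x) ∂ν) := by
  have hpos : 0 < ∫ x, Real.exp (f x) ∂ν := integral_exp_pos (exp_integrable_aux ν f)
  rw [Real.le_log_iff_exp_le hpos]
  exact convexOn_exp.map_integral_le Real.continuous_exp.continuousOn isClosed_univ
    (Eventually.of_forall fun x => mem_univ _) (f.integrable ν) (exp_integrable_aux ν f)


lemma key_aux (μ ν : Measure S) [IsProbabilityMeasure μ] [IsProbabilityMeasure ν]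
    (g : BoundedContinuousFunction S ℝ)
    (h : ∀ t : ℝ, 0 < t → t ≤ 1 → ∫ x, (t • g) x ∂μ ≤ Real.log (∫ x, Real.exp ((t • g) x) ∂ν)) :
    ∫ x, g x ∂μ ≤ ∫ x, g x ∂ν := by
  refine le_of_forall_pos_le_add fun ε hε => ?_
  set t : ℝ := min (1/(‖g‖+1)) (ε/((3/4)*‖g‖^2+1)) with ht
  have hgnn : (0:ℝ) ≤ ‖g‖ := norm_nonneg g
  have hKpos : (0:ℝ) < (3/4)*‖g‖^2+1 := by positivity
  have hgpos : (0:ℝ) < ‖g‖ + 1 := by positivity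
  have htpos : 0 < t := lt_min (by positivity) (by positivity)
  have ht1 : t ≤ 1 := le_trans (min_le_left _ _) (by rw [div_le_one hgpos]; linarith)
  have htg : t * (‖g‖ + 1) ≤ 1 := by
    have := min_le_left (1/(‖g‖+1)) (ε/((3/4)*‖g‖^2+1))
    rw [← ht] at this
    calc t * (‖g‖+1) ≤ (1/(‖g‖+1)) * (‖g‖+1) := by
          exact mul_le_mul_of_nonneg_right this (le_of_lt hgpos)
      _ = 1 := by field_simp
  -- pointwise bound
  have hpt : ∀ x, Real.exp ((t • g) x) ≤ 1 + t * g x + (3/4) * (t^2 * ‖g‖^2) := by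
    intro x
    have hb : |g x| ≤ ‖g‖ := abs_le.mpr (abs_le.mp (g.norm_coe_le_norm x))
    have habs : |t * g x| ≤ 1 := by
      rw [abs_mul, abs_of_pos htpos]
      nlinarith [abs_nonneg (g x)]
    have h2 := Real.exp_bound habs (by norm_num : 0 < 2)
    have hsum : ∑ m ∈ Finset.range 2, (t * g x) ^ m / m.factorial = 1 + t * g x := by
      simp [Finset.sum_range_succ]
    rw [hsum] at h2
    have h3 : Real.exp (t * g x) - (1 + t * g x) ≤ |t * g x| ^ 2 * ((2:ℕ).succ / ((2:ℕ).factorial * 2)) :=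
      (abs_sub_le_iff.mp h2).1
    have h4 : |t * g x| ^ 2 * ((2:ℕ).succ / ((2:ℕ).factorial * 2)) ≤ (3/4) * (t^2 * ‖g‖^2) := by
      have : ((2:ℕ).succ / ((2:ℕ).factorial * 2) : ℝ) = 3/4 := by norm_num
      rw [this, abs_mul, mul_pow, abs_of_pos htpos]
      nlinarith [mul_le_mul_of_nonneg_left (pow_le_pow_left₀ (abs_nonneg (g x)) hb 2) (sq_nonneg t)]
    have h5 : (t • g) x = t * g x := rfl
    rw [h5]; linarith
  -- integral bound
  have hInt : ∫ x, Real.exp ((t • g) x) ∂ν ≤ 1 + t * ∫ x, g x ∂ν + (3/4)*(t^2*‖g‖^2) := by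
    have h1 : Integrable (fun x => Real.exp ((t • g) x)) ν := exp_integrable_aux ν (t • g)
    have i1 : Integrable (fun _ : S => (1:ℝ)) ν := integrable_const _
    have i2 : Integrable (fun x => t * g x) ν := (g.integrable ν).const_mul t
    have i12 : Integrable (fun x => 1 + t * g x) ν := i1.add i2
    have iC : Integrable (fun _ : S => (3/4)*(t^2*‖g‖^2)) ν := integrable_const _
    have h2 : Integrable (fun x => 1 + t * g x + (3/4)*(t^2*‖g‖^2)) ν := i12.add iC
    calc ∫ x, Real.exp ((t • g) x) ∂ν ≤ ∫ x, (1 + t * g x + (3/4)*(t^2*‖g‖^2)) ∂ν :=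
          integral_mono h1 h2 hpt
      _ = 1 + t * ∫ x, g x ∂ν + (3/4)*(t^2*‖g‖^2) := by
          rw [integral_add i12 iC, integral_add i1 i2, integral_const_mul]
          simp
  have hpos : 0 < ∫ x, Real.exp ((t • g) x) ∂ν := integral_exp_pos (exp_integrable_aux ν (t • g))
  have hlog : Real.log (∫ x, Real.exp ((t • g) x) ∂ν) ≤ t * ∫ x, g x ∂ν + (3/4)*(t^2*‖g‖^2) := by
    have := Real.log_le_sub_one_of_pos hpos
    linarith
  have hL : ∫ x, (t • g) x ∂μ = t * ∫ x, g x ∂μ := by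
    have : ∀ x, (t • g) x = t * g x := fun x => rfl
    simp_rw [this]
    exact integral_const_mul t _
  have hmain : t * ∫ x, g x ∂μ ≤ t * ∫ x, g x ∂ν + (3/4)*(t^2*‖g‖^2) := by
    have := h t htpos ht1
    rw [hL] at this
    linarith
  have hdiv : ∫ x, g x ∂μ ≤ ∫ x, g x ∂ν + (3/4)*(t*‖g‖^2) := by
    nlinarith [htpos, hmain]
  have htε : t ≤ ε/((3/4)*‖g‖^2+1) := min_le_right _ _
  have : (3/4)*(t*‖g‖^2) ≤ ε := by
    have h1 : t * ((3/4)*‖g‖^2+1) ≤ ε := by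
      calc t * ((3/4)*‖g‖^2+1) ≤ (ε/((3/4)*‖g‖^2+1)) * ((3/4)*‖g‖^2+1) :=
            mul_le_mul_of_nonneg_right htε (le_of_lt hKpos)
        _ = ε := by field_simp
    nlinarith [htpos]
  linarith

end Aux

theorem stmt2 {S : Type*} [TopologicalSpace S] [PolishSpace S] [MeasurableSpace S] [BorelSpace S]
    (Γ : Set (BoundedContinuousFunction S ℝ)) (hΓ : Admissible Γ)
    (μ ν : Measure S) [IsProbabilityMeasure μ] [IsProbabilityMeasure ν] :
    0 ≤ Gdiv Γ μ ν ∧ (Gdiv Γ μ ν = 0 ↔ μ = ν) := by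
  have hzero : ∀ (μ' ν' : Measure S), IsProbabilityMeasure μ' → IsProbabilityMeasure ν' →
      (0 : EReal) ≤ Gdiv Γ μ' ν' := by
    intro μ' ν' hμ' hν'
    have hmem := hΓ.const_mem 0
    have hterm : ((∫ x, (BoundedContinuousFunction.const S (0:ℝ)) x ∂μ' -
        Real.log (∫ x, Real.exp ((BoundedContinuousFunction.const S (0:ℝ)) x) ∂ν') : ℝ) : EReal) = 0 := by
      simp
    rw [Gdiv, ← hterm]
    exact le_iSup₂ (f := fun g (_ : g ∈ Γ) =>
      ((∫ x, g x ∂μ' - Real.log (∫ x, Real.exp (g x) ∂ν') : ℝ) : EReal)) _ hmem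
  refine ⟨hzero μ ν inferInstance inferInstance, ⟨fun h => ?_, fun h => ?_⟩⟩
  · -- Gdiv = 0 → μ = ν
    have hle : ∀ f ∈ Γ, (∫ x, f x ∂μ) ≤ Real.log (∫ x, Real.exp (f x) ∂ν) := by
      intro f hf
      have h1 : ((∫ x, f x ∂μ - Real.log (∫ x, Real.exp (f x) ∂ν) : ℝ) : EReal) ≤ Gdiv Γ μ ν :=
        le_iSup₂ (f := fun g (_ : g ∈ Γ) =>
          ((∫ x, g x ∂μ - Real.log (∫ x, Real.exp (g x) ∂ν) : ℝ) : EReal)) f hf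
      rw [h] at h1
      have h2 : (∫ x, f x ∂μ - Real.log (∫ x, Real.exp (f x) ∂ν) : ℝ) ≤ 0 := by
        exact_mod_cast h1
      linarith
    have hint : ∀ g ∈ Γ, ∫ x, g x ∂μ ≤ ∫ x, g x ∂ν := by
      intro g hg
      apply key_aux μ ν g
      intro t htpos ht1
      have hmem : t • g ∈ Γ := by
        have h0 : BoundedContinuousFunction.const S (0:ℝ) ∈ Γ := hΓ.const_mem 0
        have hc := hΓ.convex hg h0 (le_of_lt htpos) (by linarith : (0:ℝ) ≤ 1 - t)
          (by ring : t + (1 - t) = 1)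
        have heq : t • g + (1-t) • BoundedContinuousFunction.const S (0:ℝ) = t • g := by
          ext x; simp
        rwa [heq] at hc
      exact hle _ hmem
    refine hΓ.determining μ ν inferInstance inferInstance fun g hg => ?_
    refine le_antisymm (hint g hg) ?_
    have hneg := hint (-g) (hΓ.neg_mem g hg)
    have hn : ∀ (κ : Measure S), ∫ x, (-g) x ∂κ = - ∫ x, g x ∂κ := by
      intro κ
      have : ∀ x, (-g) x = -(g x) := fun x => rfl
      simp_rw [this]
      exact integral_neg _
    rw [hn μ, hn ν] at hneg
    linarith
  · -- μ = ν → Gdiv = 0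
    subst h
    refine le_antisymm ?_ (hzero μ μ inferInstance inferInstance)
    rw [Gdiv]
    refine iSup₂_le fun g hg => ?_
    have := jensen_le_aux μ g
    exact_mod_cast sub_nonpos.mpr this

end
end

section
/- Let Γ ⊆ C_b(S) be admissible and ν ∈ P(S). Then for every g ∈ Γ, log ∫_S e^g dν = sup_{μ ∈ P(S)} { ∫_S g dμ − G_Γ(μ‖ν) }. -/
open MeasureTheory Filter Topology BoundedContinuousFunction Set ENNReal

noncomputable section

variable {S : Type*}

section Aux

lemma aux_int_exp {S : Type*} [TopologicalSpace S] [MeasurableSpace S] [BorelSpace S]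
    (μ : Measure S) [IsFiniteMeasure μ] (f : BoundedContinuousFunction S ℝ) :
    Integrable (fun x => Real.exp (f x)) μ := by
  have hc : Continuous fun x => Real.exp (f x) := Real.continuous_exp.comp f.continuous
  refine Integrable.mono' (integrable_const (Real.exp ‖f‖)) hc.aestronglyMeasurable ?_
  filter_upwards with x
  rw [Real.norm_eq_abs, abs_of_pos (Real.exp_pos _)]
  exact Real.exp_le_exp.mpr ((le_abs_self _).trans (f.norm_coe_le_norm x))

lemma aux_jensen {S : Type*} [TopologicalSpace S] [MeasurableSpace S] [BorelSpace S]
    (μ : Measure S) [IsProbabilityMeasure μ] (f : BoundedContinuousFunction S ℝ) :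
    ∫ x, f x ∂μ ≤ Real.log (∫ x, Real.exp (f x) ∂μ) := by
  rw [Real.le_log_iff_exp_le (integral_exp_pos (aux_int_exp μ f))]
  exact convexOn_exp.map_integral_le Real.continuous_exp.continuousOn isClosed_univ
    (Filter.Eventually.of_forall fun x => Set.mem_univ _) (f.integrable μ) (aux_int_exp μ f)

end Aux

theorem stmt5 {S : Type*} [TopologicalSpace S] [PolishSpace S] [MeasurableSpace S] [BorelSpace S]
    (Γ : Set (BoundedContinuousFunction S ℝ)) (hΓ : Admissible Γ)
    (ν : Measure S) [IsProbabilityMeasure ν]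
    (g : BoundedContinuousFunction S ℝ) (hg : g ∈ Γ) :
    ((Real.log (∫ x, Real.exp (g x) ∂ν) : ℝ) : EReal) =
      ⨆ μ : ProbabilityMeasure S,
        (((∫ x, g x ∂(μ : Measure S)) : ℝ) : EReal) - Gdiv Γ (μ : Measure S) ν := by
  set Z : ℝ := ∫ x, Real.exp (g x) ∂ν with hZdef
  have hZ : 0 < Z := integral_exp_pos (aux_int_exp ν g)
  -- upper bound
  apply le_antisymm
  · -- take the tilted measure
    set μ₀ : Measure S := ν.tilted (fun x => g x) with hμ₀def
    haveI hP0 : IsProbabilityMeasure μ₀ := isProbabilityMeasure_tilted (aux_int_exp ν g)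
    set A : ℝ := ∫ x, g x ∂μ₀ with hAdef
    -- Gdiv Γ μ₀ ν = A - log Z
    have hGdiv : Gdiv Γ μ₀ ν = ((A - Real.log Z : ℝ) : EReal) := by
      apply le_antisymm
      · refine iSup₂_le fun f hf => ?_
        rw [EReal.coe_le_coe_iff]
        -- Jensen on μ₀ applied to f - g
        have hj := aux_jensen μ₀ (f - g)
        have hco : ∀ x, (f - g) x = f x - g x := fun x => rfl
        have hint : ∫ x, (f - g) x ∂μ₀ = (∫ x, f x ∂μ₀) - A := by
          simp only [hco]
          exact integral_sub (f.integrable μ₀) (g.integrable μ₀)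
        have hexp : ∫ x, Real.exp ((f - g) x) ∂μ₀
            = (∫ x, Real.exp (f x) ∂ν) / Z := by
          have := integral_exp_tilted (μ := ν) (fun x => g x) (fun x => f x - g x)
          simp only [hco, hμ₀def]
          rw [this]
          congr 1
          refine integral_congr_ae (Filter.Eventually.of_forall fun x => ?_)
          simp [Real.exp_add, mul_comm]
        have hfpos : 0 < ∫ x, Real.exp (f x) ∂ν := integral_exp_pos (aux_int_exp ν f)
        rw [hint, hexp, Real.log_div hfpos.ne' hZ.ne'] at hj
        linarith
      · have := le_iSup₂ (f := fun f (_ : f ∈ Γ) =>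
          ((∫ x, f x ∂μ₀ - Real.log (∫ x, Real.exp (f x) ∂ν) : ℝ) : EReal)) g hg
        exact this
    refine le_trans ?_ (le_iSup _ (⟨μ₀, hP0⟩ : ProbabilityMeasure S))
    simp only [ProbabilityMeasure.coe_mk]
    rw [hGdiv, ← hAdef, ← EReal.coe_sub, EReal.coe_le_coe_iff]
    ring_nf
    rfl
  · refine iSup_le fun μ => ?_
    have hb : ((∫ x, g x ∂(μ : Measure S) - Real.log Z : ℝ) : EReal)
        ≤ Gdiv Γ (μ : Measure S) ν :=
      le_iSup₂ (f := fun f (_ : f ∈ Γ) =>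
        ((∫ x, f x ∂(μ : Measure S) - Real.log (∫ x, Real.exp (f x) ∂ν) : ℝ) : EReal)) g hg
    calc (((∫ x, g x ∂(μ : Measure S)) : ℝ) : EReal) - Gdiv Γ (μ : Measure S) ν
        ≤ (((∫ x, g x ∂(μ : Measure S)) : ℝ) : EReal)
          - ((∫ x, g x ∂(μ : Measure S) - Real.log Z : ℝ) : EReal) :=
          EReal.sub_le_sub le_rfl hb
      _ = ((Real.log Z : ℝ) : EReal) := by
          rw [← EReal.coe_sub, EReal.coe_eq_coe_iff]; ring

end
end

section
/- Let Γ ⊆ C_b(S) be admissible, ν ∈ P(S), and g ∈ Γ. Let μ₀ ∈ P(S) be the exponential tilt of ν by g, i.e. dμ₀/dν = e^g / ∫_S e^g dν. Then G_Γ(μ₀‖ν) = R(μ₀‖ν). -/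
open MeasureTheory Filter Topology BoundedContinuousFunction Set ENNReal

noncomputable section

variable {S : Type*}

lemma integrable_exp_bcf {S : Type*} [TopologicalSpace S] [MeasurableSpace S] [BorelSpace S]
    (ν : Measure S) [IsFiniteMeasure ν] (f : BoundedContinuousFunction S ℝ) :
    Integrable (fun x => Real.exp (f x)) ν := by
  refine ⟨(Real.continuous_exp.comp f.continuous).aestronglyMeasurable, ?_⟩
  refine MeasureTheory.HasFiniteIntegral.of_bounded (C := Real.exp ‖f‖) ?_
  filter_upwards with x
  rw [Real.norm_eq_abs, abs_of_pos (Real.exp_pos _)]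
  exact Real.exp_le_exp.mpr ((le_abs_self _).trans (f.norm_coe_le_norm x))

theorem stmt6 {S : Type*} [TopologicalSpace S] [PolishSpace S] [MeasurableSpace S] [BorelSpace S]
    (Γ : Set (BoundedContinuousFunction S ℝ)) (hΓ : Admissible Γ)
    (ν : Measure S) [IsProbabilityMeasure ν]
    (g : BoundedContinuousFunction S ℝ) (hg : g ∈ Γ)
    (μ₀ : Measure S) (hμ₀ : μ₀ = ν.tilted (fun x => g x)) :
    Gdiv Γ μ₀ ν = relEnt μ₀ ν := by
  classical
  -- notation
  set Z : ℝ := ∫ x, Real.exp (g x) ∂ν with hZdef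
  have hgexp : Integrable (fun x => Real.exp (g x)) ν := integrable_exp_bcf ν g
  have hZpos : 0 < Z := integral_exp_pos hgexp
  have hprob : IsProbabilityMeasure μ₀ := by
    rw [hμ₀]; exact isProbabilityMeasure_tilted hgexp
  have hac : μ₀ ≪ ν := by rw [hμ₀]; exact tilted_absolutelyContinuous ν _
  have hlogν := log_rnDeriv_tilted_left_self (μ := ν) (f := fun x => g x) hgexp
  have hlog : (fun x => Real.log ((μ₀.rnDeriv ν x).toReal))
      =ᵐ[μ₀] fun x => g x - Real.log Z := by
    rw [hμ₀]
    exact (hlogν.filter_mono (tilted_absolutelyContinuous ν _).ae_le)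
  have hgi : Integrable (fun x => g x) μ₀ := g.integrable μ₀
  have hint : Integrable (fun x => Real.log ((μ₀.rnDeriv ν x).toReal)) μ₀ :=
    (hgi.sub (integrable_const _)).congr hlog.symm
  have hRE : relEnt μ₀ ν = ((∫ x, g x ∂μ₀ - Real.log Z : ℝ) : EReal) := by
    rw [relEnt, if_pos ⟨hac, hint⟩, integral_congr_ae hlog,
      integral_sub hgi (integrable_const _), integral_const]
    simp
  rw [hRE, Gdiv]
  apply le_antisymm
  · refine iSup₂_le fun f hf => ?_
    refine EReal.coe_le_coe_iff.mpr ?_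
    set Zf : ℝ := ∫ x, Real.exp (f x) ∂ν with hZfdef
    have hfexp : Integrable (fun x => Real.exp (f x)) ν := integrable_exp_bcf ν f
    have hZfpos : 0 < Zf := integral_exp_pos hfexp
    -- Jensen for h = f - g under μ₀
    have hfi : Integrable (fun x => f x) μ₀ := f.integrable μ₀
    have hhi : Integrable (fun x => f x - g x) μ₀ := hfi.sub hgi
    have hexphi : Integrable (fun x => Real.exp (f x - g x)) μ₀ := by
      refine ⟨(Real.continuous_exp.comp (f.continuous.sub g.continuous)).aestronglyMeasurable, ?_⟩
      refine MeasureTheory.HasFiniteIntegral.of_bounded (C := Real.exp (‖f‖ + ‖g‖)) ?_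
      filter_upwards with x
      rw [Real.norm_eq_abs, abs_of_pos (Real.exp_pos _)]
      refine Real.exp_le_exp.mpr ?_
      have h1 := (le_abs_self _).trans (f.norm_coe_le_norm x)
      have h2 := (neg_le_abs _).trans (g.norm_coe_le_norm x)
      linarith
    have hjensen : Real.exp (∫ x, (f x - g x) ∂μ₀) ≤ ∫ x, Real.exp (f x - g x) ∂μ₀ :=
      convexOn_exp.map_integral_le Real.continuous_exp.continuousOn isClosed_univ
        (Filter.Eventually.of_forall fun x => Set.mem_univ _) hhi hexphi
    have hkey : ∫ x, Real.exp (f x - g x) ∂μ₀ = Zf / Z := by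
      rw [hμ₀]
      have := integral_exp_tilted (μ := ν) (fun x => g x) (fun x => f x - g x)
      rw [this]
      congr 1
      refine integral_congr_ae (Filter.Eventually.of_forall fun x => ?_)
      simp [Pi.add_apply]
    have hlogle : ∫ x, (f x - g x) ∂μ₀ ≤ Real.log (Zf / Z) := by
      rw [Real.le_log_iff_exp_le (div_pos hZfpos hZpos)]
      rw [← hkey]; exact hjensen
    rw [Real.log_div hZfpos.ne' hZpos.ne'] at hlogle
    rw [integral_sub hfi hgi] at hlogle
    linarith
  · exact le_iSup₂_of_le g hg (le_refl _)


end
end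

section
/- Let c : S×S → [0,∞] be any cost function, set Γ := Lip(c,S;C_b(S)) and G(θ‖ν) := sup_{g ∈ Γ} { ∫ g dθ − log ∫ e^g dν }. If g ∈ Lip(c,S) (g continuous, possibly unbounded, with g(x) − g(y) ≤ c(x,y) for all x,y) and θ, ν ∈ P(S) satisfy ∫_S |g| dθ < ∞, then ∫_S g dθ − log ∫_S e^g dν ≤ G(θ‖ν) ≤ R(θ‖ν). -/
open MeasureTheory Filter Topology BoundedContinuousFunction Set ENNReal

noncomputable section

variable {S : Type*}

/-- Gibbs' inequality: relative entropy is nonnegative. -/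
lemma aux_llr_nonneg {S : Type*} [MeasurableSpace S] (μ ξ : Measure S)
    [IsProbabilityMeasure μ] [IsProbabilityMeasure ξ] (hμξ : μ ≪ ξ)
    (hint : Integrable (llr μ ξ) μ) : 0 ≤ ∫ x, llr μ ξ x ∂μ := by
  set h : S → ℝ := fun x => (ξ.rnDeriv μ x).toReal with hh
  have h_ae : (fun x => -(llr μ ξ x)) =ᵐ[μ] fun x => Real.log (h x) := by
    filter_upwards [Measure.inv_rnDeriv hμξ, Measure.rnDeriv_pos hμξ,
      hμξ.ae_le (Measure.rnDeriv_lt_top μ ξ)] with x hinv hpos hlt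
    have : h x = ((μ.rnDeriv ξ x)⁻¹).toReal := by
      rw [hh]; simp only [← hinv, Pi.inv_apply]
    rw [this, ENNReal.toReal_inv, Real.log_inv, llr]
  have hposh : ∀ᵐ x ∂μ, 0 < h x := by
    filter_upwards [Measure.rnDeriv_pos' hμξ, Measure.rnDeriv_lt_top ξ μ] with x hpos hlt
    exact ENNReal.toReal_pos hpos.ne' hlt.ne
  have hInth : Integrable h μ := Measure.integrable_toReal_rnDeriv
  have hIntlog : Integrable (fun x => Real.log (h x)) μ := hint.neg.congr h_ae
  have hle : ∫ x, Real.log (h x) ∂μ ≤ ∫ x, (h x - 1) ∂μ := by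
    refine integral_mono_ae hIntlog (hInth.sub (integrable_const 1)) ?_
    filter_upwards [hposh] with x hx
    exact Real.log_le_sub_one_of_pos hx
  have hsub : ∫ x, (h x - 1) ∂μ = ∫ x, h x ∂μ - 1 := by
    rw [integral_sub hInth (integrable_const 1)]
    simp
  have hhle : ∫ x, h x ∂μ ≤ 1 := by
    have := Measure.setIntegral_toReal_rnDeriv_le (μ := ξ) (ν := μ) (s := Set.univ)
      (measure_ne_top ξ _)
    rw [setIntegral_univ] at this
    simpa using this
  have hneg : ∫ x, Real.log (h x) ∂μ = -∫ x, llr μ ξ x ∂μ := by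
    rw [← integral_neg]
    exact (integral_congr_ae h_ae).symm
  linarith [hle, hsub ▸ hle]

/-- Donsker–Varadhan inequality for bounded measurable-enough functions. -/
lemma aux_DV {S : Type*} [MeasurableSpace S] [TopologicalSpace S] [OpensMeasurableSpace S]
    (θ ν : Measure S) [IsProbabilityMeasure θ] [IsProbabilityMeasure ν]
    (hθν : θ ≪ ν) (hllr : Integrable (llr θ ν) θ)
    (f : S → ℝ) (hfc : Continuous f) (C : ℝ) (hC : ∀ x, |f x| ≤ C) :
    ∫ x, f x ∂θ - Real.log (∫ x, Real.exp (f x) ∂ν) ≤ ∫ x, llr θ ν x ∂θ := by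
  have hfθ : Integrable f θ :=
    (integrable_const C).mono' hfc.aestronglyMeasurable (ae_of_all _ fun x => by
      simpa using hC x)
  have hexp : Integrable (fun x => Real.exp (f x)) ν := by
    refine (integrable_const (Real.exp C)).mono'
      (Real.continuous_exp.comp hfc).aestronglyMeasurable (ae_of_all _ fun x => ?_)
    rw [Real.norm_eq_abs, abs_of_pos (Real.exp_pos _)]
    exact Real.exp_le_exp.2 ((le_abs_self _).trans (hC x))
  haveI : NeZero ν := ⟨IsProbabilityMeasure.ne_zero ν⟩
  haveI : IsProbabilityMeasure (ν.tilted f) := isProbabilityMeasure_tilted hexp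
  have hθξ : θ ≪ ν.tilted f := hθν.trans (absolutelyContinuous_tilted hexp)
  have hIntξ : Integrable (llr θ (ν.tilted f)) θ :=
    integrable_llr_tilted_right hθν hfθ hllr hexp
  have key := integral_llr_tilted_right hθν hfθ hexp hllr
  have hnn := aux_llr_nonneg θ (ν.tilted f) hθξ hIntξ
  linarith [key ▸ hnn]

/-- Clamping is 1-Lipschitz (one-sided version). -/
lemma aux_clamp_diff (n a b : ℝ) (h : b ≤ a) :
    max (-n) (min n a) - max (-n) (min n b) ≤ a - b := by
  simp only [max_def, min_def]
  split_ifs <;> linarith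

theorem stmt8 {S : Type*} [TopologicalSpace S] [PolishSpace S] [MeasurableSpace S] [BorelSpace S]
    (c : S → S → ℝ≥0∞) (g : S → ℝ) (hg : g ∈ LipU c)
    (θ ν : Measure S) [IsProbabilityMeasure θ] [IsProbabilityMeasure ν]
    (hgint : Integrable g θ) :
    ((∫ x, g x ∂θ : ℝ) : EReal) -
        ENNReal.log (∫⁻ x, ENNReal.ofReal (Real.exp (g x)) ∂ν) ≤ Gdiv (LipB c) θ ν ∧
    Gdiv (LipB c) θ ν ≤ relEnt θ ν := by
  obtain ⟨hgc, hgl⟩ := hg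
  constructor
  · -- Part (a)
    by_cases hA : (∫⁻ x, ENNReal.ofReal (Real.exp (g x)) ∂ν) = ⊤
    · rw [hA, ENNReal.log_top, EReal.sub_top]
      exact bot_le
    -- truncations
    set T : ℕ → S → ℝ := fun n x => max (-(n : ℝ)) (min (n : ℝ) (g x)) with hT
    have contT : ∀ n, Continuous (T n) :=
      fun n => continuous_const.max (continuous_const.min hgc)
    have absT : ∀ (n : ℕ) x, |T n x| ≤ |g x| := by
      intro n x
      show |max (-(n : ℝ)) (min (n : ℝ) (g x))| ≤ |g x|
      rw [abs_le]
      constructor <;> simp only [max_def, min_def] <;> split_ifs <;>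
        linarith [le_abs_self (g x), neg_abs_le (g x), abs_nonneg (g x),
          Nat.cast_nonneg (α := ℝ) n]
    have boundT : ∀ (n : ℕ) x, |T n x| ≤ (n : ℝ) := by
      intro n x
      show |max (-(n : ℝ)) (min (n : ℝ) (g x))| ≤ (n : ℝ)
      rw [abs_le]
      constructor <;> simp only [max_def, min_def] <;> split_ifs <;>
        linarith [Nat.cast_nonneg (α := ℝ) n]
    have tendstoT : ∀ x, Tendsto (fun n => T n x) atTop (𝓝 (g x)) := by
      intro x
      refine tendsto_const_nhds.congr' ?_
      filter_upwards [eventually_ge_atTop ⌈|g x|⌉₊] with n hn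
      have h1 : |g x| ≤ (n : ℝ) := (Nat.le_ceil _).trans (Nat.cast_le.2 hn)
      have h2 : -(n : ℝ) ≤ g x := by linarith [neg_abs_le (g x)]
      show g x = max (-(n : ℝ)) (min (n : ℝ) (g x))
      rw [min_eq_right ((le_abs_self _).trans h1), max_eq_right h2]
    set Tb : ℕ → BoundedContinuousFunction S ℝ := fun n =>
      BoundedContinuousFunction.mkOfBound ⟨T n, contT n⟩ (2 * n)
        (fun x y => by
          change dist (T n x) (T n y) ≤ 2 * (n : ℝ)
          have hx := abs_le.1 (boundT n x); have hy := abs_le.1 (boundT n y)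
          rw [Real.dist_eq, abs_sub_le_iff]
          constructor <;> linarith) with hTb
    have memTb : ∀ n, Tb n ∈ LipB c := by
      intro n x y
      show ((T n x - T n y : ℝ) : EReal) ≤ (c x y : EReal)
      rcases le_total (g x) (g y) with h | h
      · have h1 : T n x ≤ T n y := max_le_max le_rfl (min_le_min le_rfl h)
        calc ((T n x - T n y : ℝ) : EReal) ≤ ((0 : ℝ) : EReal) := by
              exact_mod_cast sub_nonpos.2 h1
          _ ≤ (c x y : EReal) := by
              simp only [EReal.coe_zero]
              exact EReal.coe_ennreal_nonneg _
      · have h1 : T n x - T n y ≤ g x - g y := aux_clamp_diff n (g x) (g y) h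
        calc ((T n x - T n y : ℝ) : EReal) ≤ ((g x - g y : ℝ) : EReal) := by
              exact_mod_cast h1
          _ ≤ (c x y : EReal) := hgl x y
    -- the LHS is a real number
    have hexpg : Integrable (fun x => Real.exp (g x)) ν := by
      refine ⟨(Real.continuous_exp.comp hgc).aestronglyMeasurable, ?_⟩
      rw [hasFiniteIntegral_iff_ofReal (ae_of_all _ fun x => (Real.exp_pos _).le)]
      exact lt_top_iff_ne_top.2 hA
    have hApos : (0 : ℝ) < ∫ x, Real.exp (g x) ∂ν := integral_exp_pos hexpg
    have hAeq : (∫⁻ x, ENNReal.ofReal (Real.exp (g x)) ∂ν)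
        = ENNReal.ofReal (∫ x, Real.exp (g x) ∂ν) :=
      (ofReal_integral_eq_lintegral_ofReal hexpg
        (ae_of_all _ fun x => (Real.exp_pos _).le)).symm
    rw [hAeq, ENNReal.log_ofReal_of_pos hApos, ← EReal.coe_sub]
    -- convergence of integrals
    have hint1 : Tendsto (fun n => ∫ x, T n x ∂θ) atTop (𝓝 (∫ x, g x ∂θ)) := by
      refine tendsto_integral_of_dominated_convergence (fun x => |g x|)
        (fun n => (contT n).aestronglyMeasurable) hgint.abs
        (fun n => ae_of_all _ fun x => by
          rw [Real.norm_eq_abs]; exact absT n x)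
        (ae_of_all _ fun x => tendstoT x)
    have hint2 : Tendsto (fun n => ∫ x, Real.exp (T n x) ∂ν) atTop
        (𝓝 (∫ x, Real.exp (g x) ∂ν)) := by
      refine tendsto_integral_of_dominated_convergence (fun x => 1 + Real.exp (g x))
        (fun n => (Real.continuous_exp.comp (contT n)).aestronglyMeasurable)
        ((integrable_const 1).add hexpg)
        (fun n => ae_of_all _ fun x => ?_)
        (ae_of_all _ fun x => (Real.continuous_exp.tendsto _).comp (tendstoT x))
      rw [Real.norm_eq_abs, abs_of_pos (Real.exp_pos _)]
      have h1 : T n x ≤ max 0 (g x) :=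
        max_le (le_max_of_le_left (neg_nonpos.2 (Nat.cast_nonneg n)))
          (le_max_of_le_right (min_le_right _ _))
      calc Real.exp (T n x) ≤ Real.exp (max 0 (g x)) := Real.exp_le_exp.2 h1
        _ = max 1 (Real.exp (g x)) := by
            rcases le_total 0 (g x) with h | h
            · rw [max_eq_right h, max_eq_right (Real.one_le_exp h)]
            · rw [max_eq_left h, Real.exp_zero, max_eq_left (Real.exp_le_one_iff.2 h)]
        _ ≤ 1 + Real.exp (g x) :=
            max_le (le_add_of_nonneg_right (Real.exp_pos _).le) (le_add_of_nonneg_left one_pos.le)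
    have hlog : Tendsto (fun n => Real.log (∫ x, Real.exp (T n x) ∂ν)) atTop
        (𝓝 (Real.log (∫ x, Real.exp (g x) ∂ν))) :=
      ((Real.continuousAt_log hApos.ne').tendsto).comp hint2
    have hr : Tendsto
        (fun n => ∫ x, T n x ∂θ - Real.log (∫ x, Real.exp (T n x) ∂ν)) atTop
        (𝓝 (∫ x, g x ∂θ - Real.log (∫ x, Real.exp (g x) ∂ν))) := hint1.sub hlog
    have hE : Tendsto
        (fun n => ((∫ x, T n x ∂θ - Real.log (∫ x, Real.exp (T n x) ∂ν) : ℝ) : EReal)) atTop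
        (𝓝 ((∫ x, g x ∂θ - Real.log (∫ x, Real.exp (g x) ∂ν) : ℝ) : EReal)) :=
      (continuous_coe_real_ereal.tendsto _).comp hr
    refine le_of_tendsto hE (Eventually.of_forall fun n => ?_)
    have : ((∫ x, (Tb n) x ∂θ - Real.log (∫ x, Real.exp ((Tb n) x) ∂ν) : ℝ) : EReal)
        ≤ Gdiv (LipB c) θ ν :=
      le_iSup₂ (f := fun (f : BoundedContinuousFunction S ℝ) (_ : f ∈ LipB c) =>
        ((∫ x, f x ∂θ - Real.log (∫ x, Real.exp (f x) ∂ν) : ℝ) : EReal)) (Tb n) (memTb n)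
    exact this
  · -- Part (b)
    unfold relEnt
    split_ifs with hcond
    · obtain ⟨hac, hint⟩ := hcond
      refine iSup₂_le fun f _ => ?_
      rw [EReal.coe_le_coe_iff]
      exact aux_DV θ ν hac hint f f.continuous ‖f‖
        (fun x => by rw [← Real.norm_eq_abs]; exact f.norm_coe_le_norm x)
    · exact le_top

end
end

section
/- Assume c satisfies Conditions (i)–(iv), fix μ, ν ∈ L¹(a), and let γ* ∈ P(S) be the (unique) minimizer of γ ↦ W_c(μ,γ) + R(γ‖ν). Then every g ∈ Lip(c,S) satisfies ∫_S |g| dγ* < ∞. -/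
open MeasureTheory Filter Topology BoundedContinuousFunction Set ENNReal

noncomputable section

variable {S : Type*}

/-! Testing the minimality of `γ*` against `γ = ν` gives `W_c(μ, γ*) ≤ W_c(μ, ν) < ∞`, the latter
because `c(x, y) ≤ a x + a y` with `a` integrable under both measures. Since `Lip(c)` is closed under
negation (`c` is symmetric), the dual formula for `W_c` then yields `∫ h dγ* ≤ ∫ h dμ + W_c(μ, γ*)`
for every bounded `c`-Lipschitz `h`. For `g ∈ Lip(c, S)` the truncations `min |g| n` are bounded and
`c`-Lipschitz, and `|g|` is `μ`-integrable, so their `γ*`-integrals are uniformly bounded; monotone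
convergence concludes. -/

lemma relEnt_self [MeasurableSpace S] (ν : Measure S) [SigmaFinite ν] : relEnt ν ν = 0 := by
  have hae : (fun x => Real.log (ν.rnDeriv ν x).toReal) =ᵐ[ν] 0 := by
    filter_upwards [Measure.rnDeriv_self ν] with x hx
    simp [hx]
  rw [relEnt, if_pos ⟨Measure.AbsolutelyContinuous.rfl, (integrable_zero _ _ _).congr hae.symm⟩,
    integral_congr_ae hae, Pi.zero_def, integral_zero, EReal.coe_zero]

lemma relEnt_ne_bot [MeasurableSpace S] (γ ν : Measure S) : relEnt γ ν ≠ ⊥ := by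
  rw [relEnt]; split_ifs <;> simp

lemma integrable_of_integral_min_abs_le [MeasurableSpace S] {γ : Measure S}
    [IsFiniteMeasure γ] {g : S → ℝ} (hg : Measurable g) {C : ℝ}
    (hbd : ∀ n : ℕ, ∫ x, min |g x| n ∂γ ≤ C) : Integrable g γ := by
  have hmeas : ∀ n : ℕ, Measurable fun x => min |g x| n := fun n => hg.abs.min measurable_const
  have hlin : ∀ n : ℕ, ∫⁻ x, ENNReal.ofReal (min |g x| n) ∂γ ≤ ENNReal.ofReal C := fun n => by
    have hint : Integrable (fun x => min |g x| n) γ :=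
      Integrable.of_bound (hmeas n).aestronglyMeasurable n <| ae_of_all _ fun x => by
        rw [Real.norm_of_nonneg (le_min (abs_nonneg _) n.cast_nonneg)]; exact min_le_right _ _
    rw [← ofReal_integral_eq_lintegral_ofReal hint
      (ae_of_all _ fun x => le_min (abs_nonneg _) n.cast_nonneg)]
    exact ENNReal.ofReal_le_ofReal (hbd n)
  have hsup : ∀ x, ⨆ n : ℕ, ENNReal.ofReal (min |g x| n) = ‖g x‖ₑ := fun x => by
    rw [← ofReal_norm, Real.norm_eq_abs]
    refine le_antisymm (iSup_le fun n => ENNReal.ofReal_le_ofReal (min_le_left _ _)) ?_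
    exact le_iSup_of_le ⌈|g x|⌉₊ (by rw [min_eq_left (Nat.le_ceil _)])
  have hmono : Monotone fun (n : ℕ) x => ENNReal.ofReal (min |g x| n) := fun m n hmn x =>
    ENNReal.ofReal_le_ofReal (min_le_min le_rfl (by exact_mod_cast hmn))
  refine ⟨hg.aestronglyMeasurable, ?_⟩
  calc ∫⁻ x, ‖g x‖ₑ ∂γ = ⨆ n : ℕ, ∫⁻ x, ENNReal.ofReal (min |g x| n) ∂γ := by
        simp_rw [← hsup]; exact lintegral_iSup (fun n => (hmeas n).ennreal_ofReal) hmono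
    _ ≤ ENNReal.ofReal C := iSup_le hlin
    _ < ⊤ := ENNReal.ofReal_lt_top

section CostLipschitz

variable {c : S → S → ℝ≥0∞}

lemma sub_le_add_of_le_cost {a : S → ℝ} (ha0 : ∀ x, 0 ≤ a x)
    (hca : ∀ x y, c x y ≤ ENNReal.ofReal (a x + a y))
    {h : S → ℝ} (hh : ∀ x y, ((h x - h y : ℝ) : EReal) ≤ (c x y : EReal)) (x y : S) :
    h x - h y ≤ a x + a y := by
  have hc : (c x y : EReal) ≤ ((a x + a y : ℝ) : EReal) := by
    calc (c x y : EReal) ≤ ((ENNReal.ofReal (a x + a y) : ℝ≥0∞) : EReal) := by exact_mod_cast hca x y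
      _ = ((a x + a y : ℝ) : EReal) := by
        rw [EReal.coe_ennreal_ofReal, max_eq_left (add_nonneg (ha0 x) (ha0 y))]
  exact_mod_cast (hh x y).trans hc

lemma abs_sub_le_cost (hsymm : ∀ x y, c x y = c y x) {h : S → ℝ}
    (hh : ∀ x y, ((h x - h y : ℝ) : EReal) ≤ (c x y : EReal)) (x y : S) :
    ((|h x - h y| : ℝ) : EReal) ≤ (c x y : EReal) := by
  rcases abs_cases (h x - h y) with ⟨e, -⟩ | ⟨e, -⟩
  · rw [e]; exact hh x y
  · rw [e, neg_sub, hsymm]; exact hh y x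

variable [TopologicalSpace S]

lemma zero_mem_lipB : (0 : S →ᵇ ℝ) ∈ LipB c := fun x y => by
  simpa using EReal.coe_ennreal_nonneg (c x y)

lemma neg_mem_lipB (hsymm : ∀ x y, c x y = c y x) {h : S →ᵇ ℝ} (hh : h ∈ LipB c) :
    -h ∈ LipB c := fun x y => by
  simpa only [coe_neg, Pi.neg_apply, neg_sub_neg, hsymm x y] using hh y x

def truncAbs {g : S → ℝ} (hg : Continuous g) (n : ℕ) : S →ᵇ ℝ :=
  mkOfBound ⟨fun x => min |g x| n, (continuous_abs.comp hg).min continuous_const⟩ n fun x y => by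
    have hIcc : ∀ z, min |g z| (n : ℝ) ∈ Icc 0 (n : ℝ) := fun z =>
      ⟨le_min (abs_nonneg _) n.cast_nonneg, min_le_right _ _⟩
    simpa using Real.dist_le_of_mem_Icc (hIcc x) (hIcc y)

@[simp]
lemma truncAbs_apply {g : S → ℝ} (hg : Continuous g) (n : ℕ) (x : S) :
    truncAbs hg n x = min |g x| n := rfl

lemma truncAbs_mem_lipB (hsymm : ∀ x y, c x y = c y x) {g : S → ℝ} (hg : g ∈ LipU c) (n : ℕ) :
    truncAbs hg.1 n ∈ LipB c := fun x y => by
  refine le_trans ?_ (abs_sub_le_cost hsymm hg.2 x y)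
  rw [truncAbs_apply, truncAbs_apply, EReal.coe_le_coe_iff]
  calc min |g x| (n : ℝ) - min |g y| n ≤ |min |g x| (n : ℝ) - min |g y| n| := le_abs_self _
    _ ≤ max |(|g x| - |g y|)| |(n : ℝ) - n| := abs_min_sub_min_le_max _ _ _ _
    _ ≤ |g x - g y| := by simpa using abs_abs_sub_abs_le_abs_sub _ _

variable [MeasurableSpace S]

lemma integral_le_integral_add_Wc (hsymm : ∀ x y, c x y = c y x) {μ γ : Measure S}
    (hfin : Wc c μ γ ≠ ⊤) {h : S →ᵇ ℝ}
    (hh : h ∈ LipB c) : ∫ x, h x ∂γ ≤ ∫ x, h x ∂μ + (Wc c μ γ).toReal := by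
  have hneg : ((∫ x, (-h) x ∂μ - ∫ x, (-h) x ∂γ : ℝ) : EReal) ≤ Wc c μ γ :=
    le_iSup₂_of_le (-h) (neg_mem_lipB hsymm hh) le_rfl
  have := EReal.toReal_le_toReal hneg (EReal.coe_ne_bot _) hfin
  simp only [EReal.toReal_coe, coe_neg, Pi.neg_apply, integral_neg] at this
  linarith

lemma Wc_ne_top_of_add_relEnt_le {μ γ ν : Measure S} {M : ℝ}
    (h : Wc c μ γ + relEnt γ ν ≤ M) : Wc c μ γ ≠ ⊤ := fun htop => by
  rw [htop, EReal.top_add_of_ne_bot (relEnt_ne_bot γ ν)] at h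
  exact EReal.coe_ne_top M (top_le_iff.mp h)

variable [OpensMeasurableSpace S]

lemma Wc_le_integral_add_integral {a : S → ℝ} (ha0 : ∀ x, 0 ≤ a x)
    (hca : ∀ x y, c x y ≤ ENNReal.ofReal (a x + a y))
    {μ ν : Measure S} [IsProbabilityMeasure μ] [IsProbabilityMeasure ν]
    (hμa : Integrable a μ) (hνa : Integrable a ν) :
    Wc c μ ν ≤ ((∫ x, a x ∂μ + ∫ x, a x ∂ν : ℝ) : EReal) := by
  refine iSup₂_le fun h hh => EReal.coe_le_coe_iff.mpr ?_
  have hpt : ∀ x, h x ≤ a x + (∫ y, a y ∂ν + ∫ y, h y ∂ν) := fun x => by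
    have hle : ∫ y, (h x - a x - a y) ∂ν ≤ ∫ y, h y ∂ν :=
      integral_mono ((integrable_const _).sub hνa) (h.integrable ν) fun y => by
        linarith [sub_le_add_of_le_cost ha0 hca hh x y]
    rw [integral_sub (integrable_const _) hνa, integral_const, probReal_univ, one_smul] at hle
    linarith
  have hμ : ∫ x, h x ∂μ ≤ ∫ x, (a x + (∫ y, a y ∂ν + ∫ y, h y ∂ν)) ∂μ :=
    integral_mono (h.integrable μ) (hμa.add (integrable_const _)) hpt
  rw [integral_add hμa (integrable_const _), integral_const, probReal_univ, one_smul] at hμ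
  linarith

lemma integrable_of_mem_lipU {a : S → ℝ} (ha0 : ∀ x, 0 ≤ a x)
    (hca : ∀ x y, c x y ≤ ENNReal.ofReal (a x + a y)) {μ : Measure S} [IsProbabilityMeasure μ]
    (hμa : Integrable a μ) {g : S → ℝ} (hg : g ∈ LipU c) : Integrable g μ := by
  obtain ⟨x₀⟩ := nonempty_of_isProbabilityMeasure μ
  refine ((integrable_const (|g x₀| + a x₀)).add hμa).mono' hg.1.aestronglyMeasurable
    (ae_of_all _ fun x => ?_)
  have h₁ := sub_le_add_of_le_cost ha0 hca hg.2 x x₀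
  have h₂ := sub_le_add_of_le_cost ha0 hca hg.2 x₀ x
  rw [Real.norm_eq_abs, Pi.add_apply, abs_le]
  constructor <;> linarith [neg_abs_le (g x₀), le_abs_self (g x₀)]

end CostLipschitz

theorem stmt10_general {S : Type*} [MetricSpace S] [MeasurableSpace S] [BorelSpace S]
    (c : S → S → ℝ≥0∞) (hsymm : ∀ x y, c x y = c y x)
    (a : S → ℝ) (ha0 : ∀ x, 0 ≤ a x)
    (hca : ∀ x y, c x y ≤ ENNReal.ofReal (a x + a y))
    (μ ν : Measure S) [IsProbabilityMeasure μ] [IsProbabilityMeasure ν]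
    (hμa : Integrable a μ) (hνa : Integrable a ν)
    (γstar : Measure S) [IsProbabilityMeasure γstar]
    (hmin : ∀ γ : Measure S, IsProbabilityMeasure γ →
      Wc c μ γstar + relEnt γstar ν ≤ Wc c μ γ + relEnt γ ν) :
    ∀ g ∈ LipU c, Integrable g γstar := by
  intro g hg
  have hWfin : Wc c μ γstar ≠ ⊤ := by
    refine Wc_ne_top_of_add_relEnt_le (M := ∫ x, a x ∂μ + ∫ x, a x ∂ν)
      ((hmin ν inferInstance).trans ?_)
    rw [relEnt_self, add_zero]
    exact Wc_le_integral_add_integral ha0 hca hμa hνa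
  have hgμ : Integrable g μ := integrable_of_mem_lipU ha0 hca hμa hg
  refine integrable_of_integral_min_abs_le hg.1.measurable
    (C := ∫ x, |g x| ∂μ + (Wc c μ γstar).toReal) fun n => ?_
  calc ∫ x, min |g x| n ∂γstar = ∫ x, truncAbs hg.1 n x ∂γstar := rfl
    _ ≤ ∫ x, truncAbs hg.1 n x ∂μ + (Wc c μ γstar).toReal :=
      integral_le_integral_add_Wc hsymm hWfin (truncAbs_mem_lipB hsymm hg n)
    _ ≤ ∫ x, |g x| ∂μ + (Wc c μ γstar).toReal := by
      gcongr ?_ + _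
      exact integral_mono ((truncAbs hg.1 n).integrable μ) hgμ.abs fun x => min_le_left _ _

theorem stmt10 {S : Type*} [MetricSpace S] [CompleteSpace S] [SecondCountableTopology S] [MeasurableSpace S] [BorelSpace S]
    (c : S → S → ℝ≥0∞) (hsymm : ∀ x y, c x y = c y x)
    (Q : Set (BoundedContinuousFunction S ℝ)) (hQne : Q.Nonempty)
    (hrep : ∀ x y, (c x y : EReal) = ⨆ u ∈ Q, ((u x - u y : ℝ) : EReal))
    (hdet : ∀ μ ν : Measure S, IsProbabilityMeasure μ → IsProbabilityMeasure ν →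
      (∀ g ∈ LipB c, ∫ x, g x ∂μ = ∫ x, g x ∂ν) → μ = ν)
    (a : S → ℝ) (ha0 : ∀ x, 0 ≤ a x)
    (hca : ∀ x y, c x y ≤ ENNReal.ofReal (a x + a y))
    (hK : ∃ K : ℕ → Set S, (∀ m, IsCompact (K m)) ∧ Monotone K ∧ (⋃ m, K m) = Set.univ ∧
      ∀ m, ∃ θ : ℝ → ℝ, (∀ r, 0 ≤ θ r) ∧ Tendsto θ (𝓝[>] (0:ℝ)) (𝓝 0) ∧
        ∃ δ : ℝ, 0 < δ ∧ ∀ x ∈ K m, ∀ y ∈ K m, dist x y ≤ δ →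
          c x y ≤ ENNReal.ofReal (θ (dist x y)))
    (μ ν : Measure S) [IsProbabilityMeasure μ] [IsProbabilityMeasure ν]
    (hμa : Integrable a μ) (hνa : Integrable a ν)
    (γstar : Measure S) [IsProbabilityMeasure γstar]
    (hmin : ∀ γ : Measure S, IsProbabilityMeasure γ →
      Wc c μ γstar + relEnt γstar ν ≤ Wc c μ γ + relEnt γ ν) :
    ∀ g ∈ LipU c, Integrable g γstar :=
  stmt10_general c hsymm a ha0 hca μ ν hμa hνa γstar hmin

end
end

section
/- Let b > 0, let ν be the uniform probability measure on [0,1] ⊂ ℝ, μ = δ₀ the Dirac mass at 0, and let bΓ₀ := { g : ℝ → ℝ bounded continuous with g(x) − g(y) ≤ b|x−y| for all x,y ∈ ℝ }. Then G_{bΓ₀}(μ‖ν) := sup_{g ∈ bΓ₀} { g(0) − log ∫_0^1 e^{g(x)} dx } = log( b / (1 − e^{−b}) ). Moreover, the corresponding optimal transport quantity satisfies W_{bc}(μ,ν) := sup_{g ∈ bΓ₀} { g(0) − ∫_0^1 g(x) dx } = b/2. -/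
open MeasureTheory Filter Topology BoundedContinuousFunction Set ENNReal

noncomputable section

variable {S : Type*}

/-!
Every admissible `g` satisfies `g x ≥ g 0 - b x` on `[0, 1]`, and both functionals only decrease
when `g` grows on `[0, 1]` with `g 0` fixed. So they are maximised by any admissible `g` equal to
`-b x` on `[0, 1]`, such as the truncated tent `-b min |x| 1`, and the values follow from
`∫₀¹ e^{-bx} dx = (1 - e^{-b}) / b` and `∫₀¹ b x dx = b / 2`.
-/

lemma EReal.biSup_coe_eq_of_forall_le {α : Type*} {s : Set α} {F : α → ℝ} {c : ℝ}
    (hle : ∀ g ∈ s, F g ≤ c) {g₀ : α} (hg₀ : g₀ ∈ s) (hF : F g₀ = c) :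
    ⨆ g ∈ s, (F g : EReal) = c :=
  le_antisymm (iSup₂_le fun g hg => EReal.coe_le_coe (hle g hg))
    (le_iSup₂_of_le g₀ hg₀ (EReal.coe_le_coe hF.ge))

lemma integral_Icc_zero_one_exp_neg_mul {b : ℝ} (hb : b ≠ 0) :
    ∫ x in Icc (0 : ℝ) 1, Real.exp (-(b * x)) = (1 - Real.exp (-b)) / b := by
  rw [integral_Icc_eq_integral_Ioc, ← intervalIntegral.integral_of_le zero_le_one]
  have := intervalIntegral.integral_comp_mul_left Real.exp (neg_ne_zero.mpr hb)
    (a := 0) (b := 1)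
  simp only [neg_mul, mul_zero, mul_one, integral_exp, Real.exp_zero, smul_eq_mul]
    at this
  rw [this]
  field_simp
  ring

lemma integral_Icc_zero_one_neg_mul (b : ℝ) :
    ∫ x in Icc (0 : ℝ) 1, -(b * x) = -(b / 2) := by
  rw [integral_Icc_eq_integral_Ioc, ← intervalIntegral.integral_of_le zero_le_one,
    intervalIntegral.integral_neg, intervalIntegral.integral_const_mul, integral_id]
  ring

lemma sub_mul_le_of_forall_sub_le_mul_abs {g : ℝ → ℝ} {b x : ℝ}
    (hg : ∀ x y, g x - g y ≤ b * |x - y|) (hx : 0 ≤ x) : g 0 - b * x ≤ g x := by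
  have := hg 0 x
  rw [zero_sub, abs_neg, abs_of_nonneg hx] at this
  linarith

section UnitInterval

variable {g : ℝ → ℝ} {b : ℝ}

lemma sub_log_integral_exp_le (hb : 0 < b) (hg : ContinuousOn g (Icc 0 1))
    (hlow : ∀ x ∈ Icc (0 : ℝ) 1, g 0 - b * x ≤ g x) :
    g 0 - Real.log (∫ x in Icc (0 : ℝ) 1, Real.exp (g x)) ≤
      Real.log (b / (1 - Real.exp (-b))) := by
  have hZ : 0 < (1 - Real.exp (-b)) / b :=
    div_pos (sub_pos.mpr (Real.exp_lt_one_iff.mpr (neg_lt_zero.mpr hb))) hb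
  have hmono : Real.exp (g 0) * ((1 - Real.exp (-b)) / b) ≤
      ∫ x in Icc (0 : ℝ) 1, Real.exp (g x) := by
    rw [← integral_Icc_zero_one_exp_neg_mul hb.ne', ← integral_const_mul]
    refine setIntegral_mono_on ?_ (Real.continuous_exp.comp_continuousOn hg).integrableOn_Icc
      measurableSet_Icc fun x hx => ?_
    · exact Continuous.integrableOn_Icc (by fun_prop)
    · rw [← Real.exp_add, Real.exp_le_exp]
      linarith [hlow x hx]
  have hlog := Real.log_le_log (by positivity) hmono
  rw [Real.log_mul (Real.exp_pos _).ne' hZ.ne', Real.log_exp] at hlog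
  rw [← inv_div, Real.log_inv]
  linarith

lemma sub_integral_le (hg : ContinuousOn g (Icc 0 1))
    (hlow : ∀ x ∈ Icc (0 : ℝ) 1, g 0 - b * x ≤ g x) :
    g 0 - ∫ x in Icc (0 : ℝ) 1, g x ≤ b / 2 := by
  have hmono : ∫ x in Icc (0 : ℝ) 1, (g 0 + -(b * x)) ≤ ∫ x in Icc (0 : ℝ) 1, g x :=
    setIntegral_mono_on (Continuous.integrableOn_Icc (by fun_prop)) hg.integrableOn_Icc
      measurableSet_Icc fun x hx => by linarith [hlow x hx]
  rw [integral_add (integrableOn_const (by simp)).integrable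
      (Continuous.integrableOn_Icc (by fun_prop)), setIntegral_const,
    integral_Icc_zero_one_neg_mul] at hmono
  simp only [Real.volume_real_Icc, sub_zero, zero_le_one, sup_of_le_left, smul_eq_mul, one_mul]
    at hmono
  linarith

end UnitInterval

def truncTent (b : ℝ) : ℝ →ᵇ ℝ :=
  ofNormedAddCommGroup (fun x => -(b * min |x| 1)) (by fun_prop) |b| fun x => by
    rw [norm_neg, norm_mul, Real.norm_eq_abs, Real.norm_eq_abs,
      abs_of_nonneg (le_min (abs_nonneg x) zero_le_one)]
    exact mul_le_of_le_one_right (abs_nonneg b) (min_le_right _ _)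

lemma truncTent_apply (b x : ℝ) : truncTent b x = -(b * min |x| 1) := rfl

lemma truncTent_zero (b : ℝ) : truncTent b 0 = 0 := by simp [truncTent_apply]

lemma truncTent_of_mem_Icc (b : ℝ) {x : ℝ} (hx : x ∈ Icc (0 : ℝ) 1) :
    truncTent b x = -(b * x) := by
  rw [truncTent_apply, abs_of_nonneg hx.1, min_eq_left hx.2]

lemma truncTent_sub_le {b : ℝ} (hb : 0 ≤ b) (x y : ℝ) :
    truncTent b x - truncTent b y ≤ b * |x - y| := by
  have h : |min |x| 1 - min |y| 1| ≤ |x - y| :=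
    (abs_min_sub_min_le_max _ _ _ _).trans
      (max_le (abs_abs_sub_abs_le_abs_sub x y) (by simp))
  rw [truncTent_apply, truncTent_apply]
  nlinarith [neg_abs_le (min |x| 1 - min |y| 1)]

lemma integral_Icc_zero_one_exp_truncTent {b : ℝ} (hb : b ≠ 0) :
    ∫ x in Icc (0 : ℝ) 1, Real.exp (truncTent b x) = (1 - Real.exp (-b)) / b := by
  rw [← integral_Icc_zero_one_exp_neg_mul hb]
  exact setIntegral_congr_fun measurableSet_Icc fun x hx => by
    simp only [truncTent_of_mem_Icc b hx]

lemma integral_Icc_zero_one_truncTent (b : ℝ) :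
    ∫ x in Icc (0 : ℝ) 1, truncTent b x = -(b / 2) := by
  rw [← integral_Icc_zero_one_neg_mul b]
  exact setIntegral_congr_fun measurableSet_Icc fun x hx => truncTent_of_mem_Icc b hx

theorem stmt18 (b : ℝ) (hb : 0 < b) :
    (⨆ g ∈ {g : BoundedContinuousFunction ℝ ℝ | ∀ x y : ℝ, g x - g y ≤ b * |x - y|},
        ((g 0 - Real.log (∫ x in Set.Icc (0:ℝ) 1, Real.exp (g x)) : ℝ) : EReal)) =
      ((Real.log (b / (1 - Real.exp (-b))) : ℝ) : EReal) ∧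
    (⨆ g ∈ {g : BoundedContinuousFunction ℝ ℝ | ∀ x y : ℝ, g x - g y ≤ b * |x - y|},
        ((g 0 - ∫ x in Set.Icc (0:ℝ) 1, g x : ℝ) : EReal)) = ((b / 2 : ℝ) : EReal) := by
  have hlow (g : ℝ →ᵇ ℝ) (hg : ∀ x y : ℝ, g x - g y ≤ b * |x - y|) :
      ∀ x ∈ Icc (0 : ℝ) 1, g 0 - b * x ≤ g x := fun _ hx =>
    sub_mul_le_of_forall_sub_le_mul_abs hg hx.1
  have htent : ∀ x y : ℝ, truncTent b x - truncTent b y ≤ b * |x - y| :=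
    truncTent_sub_le hb.le
  refine ⟨EReal.biSup_coe_eq_of_forall_le (fun g hg => ?_) htent ?_,
    EReal.biSup_coe_eq_of_forall_le (fun g hg => ?_) htent ?_⟩
  · exact sub_log_integral_exp_le hb g.continuous.continuousOn (hlow g hg)
  · rw [integral_Icc_zero_one_exp_truncTent hb.ne', truncTent_zero, zero_sub, ← Real.log_inv,
      inv_div]
  · exact sub_integral_le g.continuous.continuousOn (hlow g hg)
  · rw [integral_Icc_zero_one_truncTent, truncTent_zero]
    ring

end
end

section
/- Let Γ ⊆ C_b(S) be admissible, let p and q be Borel probability transition kernels on S, and let π_q ∈ P(S) be a stationary probability measure of q (i.e. ∫_S q(x,A) π_q(dx) = π_q(A) for all Borel A). Suppose f : S → ℝ satisfies f(x) = −log ∫_S e^{−g(y)} p(x,dy) − g(x) + a for all x ∈ S, for some g ∈ Γ and a ∈ ℝ. Then ∫_S f dπ_q ≤ ∫_S G_Γ( q(x,·) ‖ p(x,·) ) π_q(dx) + a, where the integral on the right is taken as an upper (outer) integral. -/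
open MeasureTheory Filter Topology BoundedContinuousFunction Set ENNReal

noncomputable section

variable {S : Type*}

-- The canonical map from `EReal` to `[0,∞]`, sending `⊤` to `⊤` and everything
-- else to the `ENNReal.ofReal` of its real part.
open scoped Classical in
noncomputable def eRealToENNReal (e : EReal) : ℝ≥0∞ :=
  if e = ⊤ then ⊤ else ENNReal.ofReal e.toReal

/-
Testing the supremum defining `G_Γ(q(x,·) ‖ p(x,·))` with `-g ∈ Γ` gives, for every `x`,
`-∫ g dq(x,·) - log ∫ e^{-g} dp(x,·) ≤ G_Γ(q(x,·) ‖ p(x,·))`. Integrating against `π_q`,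
stationarity replaces `∫∫ g dq(x,·) dπ_q` by `∫ g dπ_q`, so the left side integrates to
`∫ f dπ_q - a`. Everything is bounded by `‖g‖`, hence integrable.
-/

open ProbabilityTheory

section Kernels

variable {α β : Type*} [MeasurableSpace α] [MeasurableSpace β]

lemma integral_eq_integral_integral_of_bind_eq_self {E : Type*} [NormedAddCommGroup E]
    [NormedSpace ℝ E] {μ : Measure α} [SFinite μ] {κ : Kernel α α} [IsSFiniteKernel κ]
    (hμ : μ.bind κ = μ) {φ : α → E} (hφ : Integrable φ μ) :
    ∫ x, φ x ∂μ = ∫ x, ∫ y, φ y ∂κ x ∂μ := by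
  have hcomp : μ = (κ ∘ₖ Kernel.const Unit μ) () := by
    rw [← Measure.comp_eq_comp_const_apply, hμ]
  rw [hcomp] at hφ
  conv_lhs => rw [hcomp]
  rw [Kernel.integral_comp hφ, Kernel.const_apply]

lemma abs_log_integral_exp_le_norm [TopologicalSpace β] [OpensMeasurableSpace β]
    (ν : Measure β) [IsProbabilityMeasure ν] (g : β →ᵇ ℝ) :
    |Real.log (∫ y, Real.exp (g y) ∂ν)| ≤ ‖g‖ := by
  have hint : Integrable (fun y => Real.exp (g y)) ν :=
    Integrable.of_bound (by fun_prop) (Real.exp ‖g‖) (ae_of_all _ fun y => by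
      rw [Real.norm_of_nonneg (Real.exp_pos _).le, Real.exp_le_exp]
      exact (le_abs_self _).trans (g.norm_coe_le_norm y))
  have hlower : Real.exp (-‖g‖) ≤ ∫ y, Real.exp (g y) ∂ν := by
    simpa using integral_mono (integrable_const _) hint fun y =>
      Real.exp_le_exp.mpr (neg_le_of_abs_le (g.norm_coe_le_norm y))
  have hupper : ∫ y, Real.exp (g y) ∂ν ≤ Real.exp ‖g‖ := by
    simpa using integral_mono hint (integrable_const _) fun y =>
      Real.exp_le_exp.mpr (le_of_abs_le (g.norm_coe_le_norm y))
  rw [abs_le, Real.le_log_iff_exp_le ((Real.exp_pos _).trans_le hlower),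
    Real.log_le_iff_le_exp ((Real.exp_pos _).trans_le hlower)]
  exact ⟨hlower, hupper⟩

variable [TopologicalSpace β] [OpensMeasurableSpace β] {μ : Measure α} [IsFiniteMeasure μ]
  (κ : Kernel α β) [IsMarkovKernel κ] (g : β →ᵇ ℝ)

lemma integrable_integral_kernel : Integrable (fun x => ∫ y, g y ∂κ x) μ :=
  Integrable.of_bound (g.continuous.stronglyMeasurable.integral_kernel).aestronglyMeasurable ‖g‖
    (ae_of_all _ fun x => g.norm_integral_le_norm (κ x))

lemma integrable_log_integral_exp_kernel :
    Integrable (fun x => Real.log (∫ y, Real.exp (g y) ∂κ x)) μ := by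
  have hexp : StronglyMeasurable fun y => Real.exp (g y) := by fun_prop
  exact Integrable.of_bound
    (Real.measurable_log.comp hexp.integral_kernel.measurable).aestronglyMeasurable ‖g‖
    (ae_of_all _ fun x => abs_log_integral_exp_le_norm (κ x) g)

end Kernels

lemma le_Gdiv {S : Type*} [MeasurableSpace S] [TopologicalSpace S]
    {Γ : Set (S →ᵇ ℝ)} {g : S →ᵇ ℝ} (hg : g ∈ Γ) (μ ν : Measure S) :
    ((∫ x, g x ∂μ - Real.log (∫ x, Real.exp (g x) ∂ν) : ℝ) : EReal) ≤ Gdiv Γ μ ν :=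
  le_iSup₂ (f := fun g (_ : g ∈ Γ) =>
    ((∫ x, g x ∂μ - Real.log (∫ x, Real.exp (g x) ∂ν) : ℝ) : EReal)) g hg

lemma ofReal_le_eRealToENNReal {r : ℝ} {e : EReal} (h : (r : EReal) ≤ e) :
    ENNReal.ofReal r ≤ eRealToENNReal e := by
  unfold eRealToENNReal
  split_ifs with htop
  · exact le_top
  · lift e to ℝ using ⟨htop, ne_bot_of_le_ne_bot (EReal.coe_ne_bot r) h⟩
    exact ENNReal.ofReal_le_ofReal (by exact_mod_cast h)

lemma integral_le_upperLintegral {α : Type*} [MeasurableSpace α] {μ : Measure α}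
    {h : α → ℝ} (hint : Integrable h μ) {F : α → ℝ≥0∞}
    (hF : ∀ x, ENNReal.ofReal (h x) ≤ F x) :
    ((∫ x, h x ∂μ : ℝ) : EReal) ≤ (upperLintegral μ F : EReal) := by
  have hpos : ENNReal.ofReal (∫ x, h x ∂μ) ≤ ∫⁻ x, ENNReal.ofReal (h x) ∂μ := by
    rw [integral_eq_lintegral_pos_part_sub_lintegral_neg_part hint]
    exact (ENNReal.ofReal_le_ofReal (sub_le_self _ ENNReal.toReal_nonneg)).trans
      ENNReal.ofReal_toReal_le
  have hupper : ENNReal.ofReal (∫ x, h x ∂μ) ≤ upperLintegral μ F :=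
    le_iInf₂ fun G ⟨_, hFG⟩ => hpos.trans (lintegral_mono fun x => (hF x).trans (hFG x))
  calc ((∫ x, h x ∂μ : ℝ) : EReal)
      ≤ (ENNReal.ofReal (∫ x, h x ∂μ) : EReal) := by
        rw [EReal.coe_ennreal_ofReal]; exact_mod_cast le_max_left _ _
    _ ≤ _ := EReal.coe_ennreal_le_coe_ennreal_iff.mpr hupper

theorem stmt19_general {S : Type*} [TopologicalSpace S] [MeasurableSpace S] [BorelSpace S]
    (Γ : Set (BoundedContinuousFunction S ℝ)) (hΓ : Admissible Γ)
    (p q : ProbabilityTheory.Kernel S S)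
    [ProbabilityTheory.IsMarkovKernel p] [ProbabilityTheory.IsMarkovKernel q]
    (πq : Measure S) [IsProbabilityMeasure πq]
    (hstat : πq.bind (fun x => q x) = πq)
    (f : S → ℝ) (g : BoundedContinuousFunction S ℝ) (hg : g ∈ Γ) (a : ℝ)
    (hf : ∀ x, f x = - Real.log (∫ y, Real.exp (-(g y)) ∂(p x)) - g x + a) :
    ((∫ x, f x ∂πq : ℝ) : EReal) ≤
      ((upperLintegral πq (fun x => eRealToENNReal (Gdiv Γ (q x) (p x))) : ℝ≥0∞) : EReal) +
        (a : EReal) := by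
  set L := fun x => Real.log (∫ y, Real.exp (-(g y)) ∂(p x))
  set Q := fun x => ∫ y, g y ∂(q x)
  have hL : Integrable L πq := integrable_log_integral_exp_kernel p (-g)
  have hQ : Integrable Q πq := integrable_integral_kernel q g
  have hgQ : ∫ x, g x ∂πq = ∫ x, Q x ∂πq :=
    integral_eq_integral_integral_of_bind_eq_self hstat (g.integrable πq)
  have hfh : ∫ x, f x ∂πq = ∫ x, (-Q x - L x) ∂πq + a := by
    have hLg : Integrable (fun x => -L x - g x) πq := hL.neg.sub (g.integrable πq)
    simp_rw [hf]
    change ∫ x, (-L x - g x + a) ∂πq = _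
    rw [integral_add hLg (integrable_const a),
      integral_sub (f := fun x => -L x) hL.neg (g.integrable πq),
      integral_sub (f := fun x => -Q x) hQ.neg hL, integral_neg, integral_neg, hgQ]
    simp only [integral_const, probReal_univ, smul_eq_mul, one_mul]
    ring
  have hpt : ∀ x, ((-Q x - L x : ℝ) : EReal) ≤ Gdiv Γ (q x) (p x) := fun x => by
    simpa [Q, L, integral_neg, sub_eq_add_neg] using le_Gdiv (hΓ.neg_mem g hg) (q x) (p x)
  rw [hfh, EReal.coe_add]
  gcongr
  exact integral_le_upperLintegral (hQ.neg.sub hL) fun x => ofReal_le_eRealToENNReal (hpt x)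

theorem stmt19 {S : Type*} [TopologicalSpace S] [PolishSpace S] [MeasurableSpace S] [BorelSpace S]
    (Γ : Set (BoundedContinuousFunction S ℝ)) (hΓ : Admissible Γ)
    (p q : ProbabilityTheory.Kernel S S)
    [ProbabilityTheory.IsMarkovKernel p] [ProbabilityTheory.IsMarkovKernel q]
    (πq : Measure S) [IsProbabilityMeasure πq]
    (hstat : πq.bind (fun x => q x) = πq)
    (f : S → ℝ) (g : BoundedContinuousFunction S ℝ) (hg : g ∈ Γ) (a : ℝ)
    (hf : ∀ x, f x = - Real.log (∫ y, Real.exp (-(g y)) ∂(p x)) - g x + a) :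
    ((∫ x, f x ∂πq : ℝ) : EReal) ≤
      ((upperLintegral πq (fun x => eRealToENNReal (Gdiv Γ (q x) (p x))) : ℝ≥0∞) : EReal) +
        (a : EReal) :=
  stmt19_general Γ hΓ p q πq hstat f g hg a hf
end
end
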